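/- arXiv:2409.09433 — 4 statements merged into one kernel-verified Lean document; each statement's English description precedes it below -/
import Mathlib

section
/- Let d ≥ 3, γ ∈ (0, 1/2], C₁ ≥ 0 and s > 0. Let K : ℝ^d → ℝ be differentiable at every point z ≠ 0 with |K(z)| ≤ C₁‖z‖^{2−d} and ‖∇K(z)‖ ≤ C₁‖z‖^{1−d} for all z ≠ 0. Let x₁, x₂, y ∈ ℝ^d be such that ‖y − ξ‖ ≥ s for every point ξ on the closed segment joining x₁ and x₂. Then |K(y − x₁) − K(y − x₂)| ≤ 2 C₁ s^{2−d−2γ} ‖x₁ − x₂‖^{2γ}. -/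
/-!
On the segment from `y - x₁` to `y - x₂` the kernel is bounded by `C₁ s^{2-d}` and its derivative
by `C₁ s^{1-d}`. The size bound at the endpoints and the mean value theorem therefore bound the
difference by `2 C₁ s^{1-d} min(s, ‖x₁ - x₂‖)`, and `min(s, t) ≤ s^{1-2γ} t^{2γ}`.
-/

open Real Set

lemma Real.min_le_rpow_mul_rpow {a b θ : ℝ} (ha : 0 ≤ a) (hb : 0 ≤ b) (hθ : θ ∈ Icc 0 1) :
    min a b ≤ a ^ (1 - θ) * b ^ θ := by
  have hm : 0 ≤ min a b := le_min ha hb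
  have h1θ : 0 ≤ 1 - θ := sub_nonneg.2 hθ.2
  calc min a b = min a b ^ (1 - θ) * min a b ^ θ := by
        rw [← rpow_add' hm (by norm_num), sub_add_cancel, rpow_one]
    _ ≤ a ^ (1 - θ) * b ^ θ := by
        gcongr
        exacts [min_le_left a b, hθ.1, min_le_right a b]

section

variable {E : Type*} [NormedAddCommGroup E] [NormedSpace ℝ E]

lemma sub_mem_segment_of_mem_segment_sub {y z a b : E} (h : z ∈ segment ℝ (y - a) (y - b)) :
    y - z ∈ segment ℝ a b := by
  obtain ⟨u, v, hu, hv, huv, rfl⟩ := h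
  refine ⟨u, v, hu, hv, huv, ?_⟩
  calc u • a + v • b = (u + v) • y - (u • (y - a) + v • (y - b)) := by module
    _ = _ := by rw [huv, one_smul]

variable {F : Type*} [NormedAddCommGroup F] [NormedSpace ℝ F]

theorem norm_sub_le_of_decay_bounds_on_segment {f : E → F} {a b : E}
    {C s p θ : ℝ} (hC : 0 ≤ C) (hs : 0 < s) (hp : p ≤ 0) (hθ : θ ∈ Icc 0 1)
    (hseg : ∀ z ∈ segment ℝ a b, s ≤ ‖z‖)
    (hdiff : ∀ z ∈ segment ℝ a b, DifferentiableAt ℝ f z)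
    (hf : ∀ z ∈ segment ℝ a b, ‖f z‖ ≤ C * ‖z‖ ^ p)
    (hf' : ∀ z ∈ segment ℝ a b, ‖fderiv ℝ f z‖ ≤ C * ‖z‖ ^ (p - 1)) :
    ‖f a - f b‖ ≤ 2 * C * s ^ (p - θ) * ‖a - b‖ ^ θ := by
  have hbound : ∀ q : ℝ, q ≤ 0 → ∀ z ∈ segment ℝ a b, C * ‖z‖ ^ q ≤ C * s ^ q := fun q hq z hz =>
    mul_le_mul_of_nonneg_left (Real.rpow_le_rpow_of_nonpos hs (hseg z hz) hq) hC
  have hsize : ‖f a - f b‖ ≤ 2 * C * s ^ (p - 1) * s := by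
    have ha := (hf a (left_mem_segment ℝ a b)).trans (hbound p hp a (left_mem_segment ℝ a b))
    have hb := (hf b (right_mem_segment ℝ a b)).trans (hbound p hp b (right_mem_segment ℝ a b))
    calc ‖f a - f b‖ ≤ ‖f a‖ + ‖f b‖ := norm_sub_le _ _
      _ ≤ 2 * C * s ^ p := by linarith
      _ = 2 * C * s ^ (p - 1) * s := by
        rw [mul_assoc _ (s ^ (p - 1)), ← rpow_add_one hs.ne', sub_add_cancel, mul_assoc]
  have hlip : ‖f a - f b‖ ≤ 2 * C * s ^ (p - 1) * ‖a - b‖ := by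
    have := (convex_segment a b).norm_image_sub_le_of_norm_fderiv_le hdiff
      (fun z hz => (hf' z hz).trans (hbound (p - 1) (by linarith) z hz))
      (right_mem_segment ℝ a b) (left_mem_segment ℝ a b)
    have : 0 ≤ C * s ^ (p - 1) * ‖a - b‖ := by positivity
    linarith
  calc ‖f a - f b‖ ≤ 2 * C * s ^ (p - 1) * min s ‖a - b‖ := by
        rw [mul_min_of_nonneg _ _ (by positivity)]; exact le_min hsize hlip
    _ ≤ 2 * C * s ^ (p - 1) * (s ^ (1 - θ) * ‖a - b‖ ^ θ) := by
        gcongr; exact min_le_rpow_mul_rpow hs.le (norm_nonneg _) hθ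
    _ = 2 * C * s ^ (p - θ) * ‖a - b‖ ^ θ := by
        rw [show p - θ = (p - 1) + (1 - θ) by ring, rpow_add hs]; ring

end

theorem kernel_difference_interpolation
    (d : ℕ) (hd : 3 ≤ d) (γ : ℝ) (hγ : γ ∈ Set.Ioc (0:ℝ) (1/2))
    (C₁ : ℝ) (hC₁ : 0 ≤ C₁) (s : ℝ) (hs : 0 < s)
    (K : EuclideanSpace ℝ (Fin d) → ℝ)
    (hdiff : ∀ z : EuclideanSpace ℝ (Fin d), z ≠ 0 → DifferentiableAt ℝ K z)
    (hK : ∀ z : EuclideanSpace ℝ (Fin d), z ≠ 0 → |K z| ≤ C₁ * ‖z‖ ^ ((2:ℝ) - d))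
    (hK' : ∀ z : EuclideanSpace ℝ (Fin d), z ≠ 0 →
      ‖gradient K z‖ ≤ C₁ * ‖z‖ ^ ((1:ℝ) - d))
    (x₁ x₂ y : EuclideanSpace ℝ (Fin d))
    (hseg : ∀ ξ ∈ segment ℝ x₁ x₂, s ≤ ‖y - ξ‖) :
    |K (y - x₁) - K (y - x₂)| ≤
      2 * C₁ * s ^ ((2:ℝ) - d - 2 * γ) * ‖x₁ - x₂‖ ^ (2 * γ) := by
  have hseg' : ∀ z ∈ segment ℝ (y - x₁) (y - x₂), s ≤ ‖z‖ := fun z hz => by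
    simpa using hseg _ (sub_mem_segment_of_mem_segment_sub hz)
  have hne : ∀ z ∈ segment ℝ (y - x₁) (y - x₂), z ≠ 0 := fun z hz =>
    norm_pos_iff.1 (hs.trans_le (hseg' z hz))
  have hd' : (2:ℝ) - d ≤ 0 := by
    have : (3:ℝ) ≤ d := by exact_mod_cast hd
    linarith
  have := norm_sub_le_of_decay_bounds_on_segment (f := K) (θ := 2 * γ) hC₁ hs hd'
    ⟨by linarith [hγ.1], by linarith [hγ.2]⟩ hseg' (fun z hz => hdiff z (hne z hz))
    (fun z hz => hK z (hne z hz))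
    (fun z hz => by
      rw [← (InnerProductSpace.toDual ℝ _).symm.norm_map, show (2:ℝ) - d - 1 = 1 - d by ring]
      exact hK' z (hne z hz))
  rwa [Real.norm_eq_abs, sub_sub_sub_cancel_left, norm_sub_rev] at this
end

section
/- Let d ≥ 3, γ ∈ (0, 1/2], C₁ ≥ 0 and s > 0. Let K : ℝ^d → ℝ be twice differentiable at every point z ≠ 0 with ‖∇K(z)‖ ≤ C₁‖z‖^{1−d} and with the operator norm of the Hessian satisfying ‖D²K(z)‖ ≤ C₁‖z‖^{−d} for all z ≠ 0. Let x₁, x₂, y ∈ ℝ^d be such that ‖y − ξ‖ ≥ s for every point ξ on the closed segment joining x₁ and x₂. Then ‖∇K(y − x₁) − ∇K(y − x₂)‖ ≤ 2 C₁ s^{1−d−2γ} ‖x₁ − x₂‖^{2γ}. -/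
/-!
Write `r = ‖x₁ - x₂‖`. Every point of the segment from `y - x₁` to `y - x₂` is at distance at
least `s` from the singularity, so the gradient is bounded there by `C₁ s^(1-d)` and the Hessian by
`C₁ s^(-d)`. The triangle inequality and the mean value inequality then bound the difference by
`min (2 C₁ s^(1-d)) (C₁ s^(-d) r) ≤ 2 C₁ s^(1-d) min 1 (r / s)`, and `min 1 t ≤ t^(2γ)`
interpolates between the two bounds.
-/

namespace Real

theorem min_one_le_rpow {t α : ℝ} (ht : 0 ≤ t) (hα₀ : 0 ≤ α) (hα₁ : α ≤ 1) :
    min 1 t ≤ t ^ α := by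
  rcases le_total t 1 with ht₁ | ht₁
  · calc min 1 t ≤ t := min_le_right _ _
      _ = t ^ (1 : ℝ) := (rpow_one t).symm
      _ ≤ t ^ α := rpow_le_rpow_of_exponent_ge' ht ht₁ hα₀ hα₁
  · exact (min_le_left _ _).trans (one_le_rpow ht₁ hα₀)

theorem min_le_rpow_interpolation {C s r p α : ℝ} (hC : 0 ≤ C) (hs : 0 < s) (hr : 0 ≤ r)
    (hα₀ : 0 ≤ α) (hα₁ : α ≤ 1) :
    min (2 * C * s ^ p) (C * s ^ (p - 1) * r) ≤ 2 * C * s ^ (p - α) * r ^ α := by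
  have hA : 0 ≤ 2 * C * s ^ p := by positivity
  calc min (2 * C * s ^ p) (C * s ^ (p - 1) * r)
      ≤ min (2 * C * s ^ p * 1) (2 * C * s ^ p * (r / s)) := by
        refine min_le_min (mul_one _).ge ?_
        rw [rpow_sub_one hs.ne', mul_div_assoc', div_mul_eq_mul_div, mul_div_assoc]
        have : 0 ≤ C * s ^ p * (r / s) := by positivity
        linarith
    _ = 2 * C * s ^ p * min 1 (r / s) := (mul_min_of_nonneg _ _ hA).symm
    _ ≤ 2 * C * s ^ p * (r / s) ^ α :=
        mul_le_mul_of_nonneg_left (min_one_le_rpow (div_nonneg hr hs.le) hα₀ hα₁) hA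
    _ = 2 * C * s ^ (p - α) * r ^ α := by
        rw [div_rpow hr hs.le, rpow_sub hs]
        field_simp

end Real

section Segment

variable {E F : Type*} [NormedAddCommGroup E] [NormedSpace ℝ E]
  [NormedAddCommGroup F] [NormedSpace ℝ F]

theorem le_norm_of_mem_segment_sub {s : ℝ} {x₁ x₂ y : E}
    (hseg : ∀ ξ ∈ segment ℝ x₁ x₂, s ≤ ‖y - ξ‖) :
    ∀ ζ ∈ segment ℝ (y - x₁) (y - x₂), s ≤ ‖ζ‖ := by
  rintro _ ⟨a, b, ha, hb, hab, rfl⟩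
  have hζ : a • (y - x₁) + b • (y - x₂) = y - (a • x₁ + b • x₂) := by
    calc a • (y - x₁) + b • (y - x₂) = (a + b) • y - (a • x₁ + b • x₂) := by
          simp only [smul_sub, add_smul]; abel
      _ = y - (a • x₁ + b • x₂) := by rw [hab, one_smul]
  rw [hζ]
  exact hseg _ ⟨a, b, ha, hb, hab, rfl⟩

theorem norm_sub_le_min_of_norm_fderiv_le {g : E → F} {M₀ M₁ : ℝ} {u v : E}
    (hu : ‖g u‖ ≤ M₀) (hv : ‖g v‖ ≤ M₀)
    (hdiff : ∀ ξ ∈ segment ℝ u v, DifferentiableAt ℝ g ξ)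
    (hderiv : ∀ ξ ∈ segment ℝ u v, ‖fderiv ℝ g ξ‖ ≤ M₁) :
    ‖g u - g v‖ ≤ min (2 * M₀) (M₁ * ‖u - v‖) := by
  refine le_min ?_ ?_
  · linarith [norm_sub_le (g u) (g v)]
  · exact (convex_segment u v).norm_image_sub_le_of_norm_fderiv_le hdiff hderiv
      (right_mem_segment ℝ u v) (left_mem_segment ℝ u v)

end Segment

theorem norm_le_mul_rpow_of_le_norm {E G : Type*} [NormedAddCommGroup E] [SeminormedAddCommGroup G]
    {f : E → G} {C p s : ℝ} (hC : 0 ≤ C) (hp : p ≤ 0) (hs : 0 < s)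
    (hf : ∀ z : E, z ≠ 0 → ‖f z‖ ≤ C * ‖z‖ ^ p) :
    ∀ z : E, s ≤ ‖z‖ → ‖f z‖ ≤ C * s ^ p := by
  intro z hz
  have hz₀ : z ≠ 0 := norm_pos_iff.mp (hs.trans_le hz)
  exact (hf z hz₀).trans (mul_le_mul_of_nonneg_left (Real.rpow_le_rpow_of_nonpos hs hz hp) hC)

theorem kernel_gradient_difference_interpolation_general
    (d : ℕ) (hd : 3 ≤ d) (γ : ℝ) (hγ : γ ∈ Set.Ioc (0:ℝ) (1/2))
    (C₁ : ℝ) (hC₁ : 0 ≤ C₁) (s : ℝ) (hs : 0 < s)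
    (K : EuclideanSpace ℝ (Fin d) → ℝ)
    (hdiff2 : ∀ z : EuclideanSpace ℝ (Fin d), z ≠ 0 → DifferentiableAt ℝ (gradient K) z)
    (hK' : ∀ z : EuclideanSpace ℝ (Fin d), z ≠ 0 →
      ‖gradient K z‖ ≤ C₁ * ‖z‖ ^ ((1:ℝ) - d))
    (hK'' : ∀ z : EuclideanSpace ℝ (Fin d), z ≠ 0 →
      ‖fderiv ℝ (gradient K) z‖ ≤ C₁ * ‖z‖ ^ (-(d:ℝ)))
    (x₁ x₂ y : EuclideanSpace ℝ (Fin d))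
    (hseg : ∀ ξ ∈ segment ℝ x₁ x₂, s ≤ ‖y - ξ‖) :
    ‖gradient K (y - x₁) - gradient K (y - x₂)‖ ≤
      2 * C₁ * s ^ ((1:ℝ) - d - 2 * γ) * ‖x₁ - x₂‖ ^ (2 * γ) := by
  obtain ⟨hγ₀, hγ₁⟩ := hγ
  have hd' : (3 : ℝ) ≤ d := by exact_mod_cast hd
  have hfar := le_norm_of_mem_segment_sub hseg
  have hgrad := norm_le_mul_rpow_of_le_norm hC₁ (by linarith) hs hK'
  have hhess := norm_le_mul_rpow_of_le_norm hC₁ (by linarith) hs hK''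
  calc ‖gradient K (y - x₁) - gradient K (y - x₂)‖
      ≤ min (2 * (C₁ * s ^ ((1:ℝ) - d))) (C₁ * s ^ (-(d:ℝ)) * ‖(y - x₁) - (y - x₂)‖) :=
        norm_sub_le_min_of_norm_fderiv_le
          (hgrad _ (hfar _ (left_mem_segment ℝ _ _))) (hgrad _ (hfar _ (right_mem_segment ℝ _ _)))
          (fun ξ hξ => hdiff2 ξ (norm_pos_iff.mp (hs.trans_le (hfar ξ hξ))))
          (fun ξ hξ => hhess ξ (hfar ξ hξ))
    _ = min (2 * C₁ * s ^ ((1:ℝ) - d)) (C₁ * s ^ ((1:ℝ) - d - 1) * ‖x₁ - x₂‖) := by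
        rw [sub_sub_sub_cancel_left, norm_sub_rev, sub_sub_cancel_left, ← mul_assoc]
    _ ≤ 2 * C₁ * s ^ ((1:ℝ) - d - 2 * γ) * ‖x₁ - x₂‖ ^ (2 * γ) :=
        Real.min_le_rpow_interpolation hC₁ hs (norm_nonneg _) (by linarith) (by linarith)

theorem kernel_gradient_difference_interpolation
    (d : ℕ) (hd : 3 ≤ d) (γ : ℝ) (hγ : γ ∈ Set.Ioc (0:ℝ) (1/2))
    (C₁ : ℝ) (hC₁ : 0 ≤ C₁) (s : ℝ) (hs : 0 < s)
    (K : EuclideanSpace ℝ (Fin d) → ℝ)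
    (hdiff : ∀ z : EuclideanSpace ℝ (Fin d), z ≠ 0 → DifferentiableAt ℝ K z)
    (hdiff2 : ∀ z : EuclideanSpace ℝ (Fin d), z ≠ 0 → DifferentiableAt ℝ (gradient K) z)
    (hK' : ∀ z : EuclideanSpace ℝ (Fin d), z ≠ 0 →
      ‖gradient K z‖ ≤ C₁ * ‖z‖ ^ ((1:ℝ) - d))
    (hK'' : ∀ z : EuclideanSpace ℝ (Fin d), z ≠ 0 →
      ‖fderiv ℝ (gradient K) z‖ ≤ C₁ * ‖z‖ ^ (-(d:ℝ)))
    (x₁ x₂ y : EuclideanSpace ℝ (Fin d))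
    (hseg : ∀ ξ ∈ segment ℝ x₁ x₂, s ≤ ‖y - ξ‖) :
    ‖gradient K (y - x₁) - gradient K (y - x₂)‖ ≤
      2 * C₁ * s ^ ((1:ℝ) - d - 2 * γ) * ‖x₁ - x₂‖ ^ (2 * γ) :=
  kernel_gradient_difference_interpolation_general d hd γ hγ C₁ hC₁ s hs K hdiff2 hK' hK'' x₁ x₂ y
    hseg
end

section
/- Let d ≥ 3, γ ∈ (0, 1/2), and set β := (d−2)/(d−2+2γ). Let C₀, C₁, C₂, M₀ ≥ 0. Then there exists a constant C, depending only on d, γ, C₀, C₁, C₂, such that the following holds. Let δ ∈ (0, 1], and let x₁, x₂ ∈ ℝ^d with ‖x₁ − x₂‖ ≤ δ^β. Let K : ℝ^d → ℝ be twice continuously differentiable on ℝ^d ∖ {0} with |K(z)| ≤ C₁‖z‖^{2−d}, ‖∇K(z)‖ ≤ C₁‖z‖^{1−d}, and ‖D²K(z)‖ ≤ C₁‖z‖^{−d} for all z ≠ 0, and set ψ(y) := K(y − x₁) − K(y − x₂). Let A ⊆ ℝ^d be Lebesgue measurable with measure at most C₀ δ^d and such that ‖y − ξ‖ ≥ 9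 δ^β for every y ∈ A and every ξ on the closed segment joining x₁ and x₂. Let M : ℝ^d → ℝ be measurable with |M(y)| ≤ M₀ for all y ∈ A, and let η : ℝ^d → ℝ be twice continuously differentiable with ‖∇η(y)‖ ≤ 4/δ and |Δη(y)| ≤ C₂/δ² for all y ∈ A. Then |∫_A M(y) [ ψ(y) Δη(y) + 2 ⟨∇ψ(y), ∇η(y)⟩ ] dy| ≤ C M₀ ‖x₁ − x₂‖^{2γ}. -/
/-! For `y ∈ A` the whole segment from `y - x₁` to `y - x₂` stays at distance `ρ = 9 δ^β` from
the origin, so the mean value theorem bounds `ψ(y)` by `C₁ ρ^(1-d) ‖x₁ - x₂‖` and `∇ψ(y)` by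
`C₁ ρ^(-d) ‖x₁ - x₂‖`. Together with the bounds on `M`, `Δη`, `∇η` and `|A| ≤ C₀ δ^d` this leaves
the products `ρ^q ‖x₁ - x₂‖ δ^(-q-1)` for `q = 1 - d` and `q = -d`. Splitting
`‖x₁ - x₂‖ ≤ δ^(β(1-2γ)) ‖x₁ - x₂‖^(2γ)`, the exponent of `δ` that remains is
`2γ(1 - d - q)/(d - 2 + 2γ) ≥ 0`, which is where the choice of `β` enters. -/

open MeasureTheory
open scoped RealInnerProductSpace

/-- Second-order partial derivative `∂ᵢ∂ⱼ φ` on Euclidean space. -/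
noncomputable def pd2 {d : ℕ} (φ : EuclideanSpace ℝ (Fin d) → ℝ) (i j : Fin d)
    (y : EuclideanSpace ℝ (Fin d)) : ℝ :=
  fderiv ℝ (fun z => fderiv ℝ φ z (EuclideanSpace.single i 1)) y (EuclideanSpace.single j 1)

section Gradient

variable {E : Type*} [NormedAddCommGroup E] [InnerProductSpace ℝ E] [CompleteSpace E]

lemma norm_fderiv_eq_norm_gradient (f : E → ℝ) (x : E) : ‖fderiv ℝ f x‖ = ‖gradient f x‖ := by
  rw [← toDual_gradient, LinearIsometryEquiv.norm_map]

lemma ContDiffAt.differentiableAt_gradient {f : E → ℝ} {x : E} (hf : ContDiffAt ℝ 2 f x) :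
    DifferentiableAt ℝ (gradient f) x :=
  (InnerProductSpace.toDual ℝ E).symm.differentiableAt.comp x
    ((hf.fderiv_right (m := 1) (by norm_num)).differentiableAt one_ne_zero)

end Gradient

lemma exists_mem_segment_eq_sub {E : Type*} [AddCommGroup E] [Module ℝ E] {x₁ x₂ y z : E}
    (hz : z ∈ segment ℝ (y - x₁) (y - x₂)) : ∃ ξ ∈ segment ℝ x₁ x₂, y - ξ = z := by
  rwa [← vsub_eq_sub, ← vsub_eq_sub, ← AffineEquiv.constVSub_apply ℝ,
    ← AffineEquiv.constVSub_apply ℝ, ← AffineEquiv.coe_toAffineMap, ← image_segment] at hz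

theorem norm_sub_le_of_norm_fderiv_le_rpow {E F : Type*} [NormedAddCommGroup E] [NormedSpace ℝ E]
    [NormedAddCommGroup F] [NormedSpace ℝ F] {f : E → F} {C ρ q : ℝ} {a b : E}
    (hf : ∀ z, z ≠ 0 → DifferentiableAt ℝ f z)
    (hbound : ∀ z, z ≠ 0 → ‖fderiv ℝ f z‖ ≤ C * ‖z‖ ^ q)
    (hC : 0 ≤ C) (hρ : 0 < ρ) (hq : q ≤ 0) (hfar : ∀ z ∈ segment ℝ a b, ρ ≤ ‖z‖) :
    ‖f a - f b‖ ≤ C * ρ ^ q * ‖a - b‖ := by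
  have hne : ∀ z ∈ segment ℝ a b, z ≠ 0 := fun z hz h0 => by
    have := hfar z hz
    rw [h0, norm_zero] at this
    linarith
  exact (convex_segment a b).norm_image_sub_le_of_norm_fderiv_le (fun z hz => hf z (hne z hz))
    (fun z hz => (hbound z (hne z hz)).trans <|
      mul_le_mul_of_nonneg_left (Real.rpow_le_rpow_of_nonpos hρ (hfar z hz) hq) hC)
    (right_mem_segment ℝ a b) (left_mem_segment ℝ a b)

theorem norm_sub_le_of_norm_fderiv_le_rpow_of_forall_mem_segment {E F : Type*}
    [NormedAddCommGroup E] [NormedSpace ℝ E] [NormedAddCommGroup F] [NormedSpace ℝ F]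
    {f : E → F} {C ρ q : ℝ} {x₁ x₂ y : E} (hf : ∀ z, z ≠ 0 → DifferentiableAt ℝ f z)
    (hbound : ∀ z, z ≠ 0 → ‖fderiv ℝ f z‖ ≤ C * ‖z‖ ^ q)
    (hC : 0 ≤ C) (hρ : 0 < ρ) (hq : q ≤ 0) (hfar : ∀ ξ ∈ segment ℝ x₁ x₂, ρ ≤ ‖y - ξ‖) :
    ‖f (y - x₁) - f (y - x₂)‖ ≤ C * ρ ^ q * ‖x₁ - x₂‖ := by
  have := norm_sub_le_of_norm_fderiv_le_rpow hf hbound hC hρ hq fun z hz => by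
    obtain ⟨ξ, hξ, rfl⟩ := exists_mem_segment_eq_sub hz
    exact hfar ξ hξ
  rwa [sub_sub_sub_cancel_left, norm_sub_rev x₂] at this

lemma le_rpow_mul_rpow_of_le {r s θ : ℝ} (hr : 0 ≤ r) (hrs : r ≤ s) (hθ : θ ≤ 1) :
    r ≤ s ^ (1 - θ) * r ^ θ :=
  calc r = r ^ (1 - θ) * r ^ θ := by
        rw [← Real.rpow_add' hr (by simp : 1 - θ + θ ≠ 0), sub_add_cancel, Real.rpow_one]
    _ ≤ s ^ (1 - θ) * r ^ θ := by gcongr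

lemma rpow_mul_mul_rpow_le_rpow {d γ δ r ρ q : ℝ} (hγ : 0 ≤ γ) (hγ₁ : 2 * γ ≤ 1)
    (hD : 0 < d - 2 + 2 * γ) (hδ : 0 < δ) (hδ₁ : δ ≤ 1) (hr : 0 ≤ r)
    (hrδ : r ≤ δ ^ ((d - 2) / (d - 2 + 2 * γ))) (hρ : δ ^ ((d - 2) / (d - 2 + 2 * γ)) ≤ ρ)
    (hq : q ≤ 1 - d) :
    ρ ^ q * r * δ ^ (-q - 1) ≤ r ^ (2 * γ) := by
  set β := (d - 2) / (d - 2 + 2 * γ) with hβ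
  have hexp : β * q + β * (1 - 2 * γ) + (-q - 1) = 2 * γ * (1 - d - q) / (d - 2 + 2 * γ) := by
    rw [hβ]
    field_simp
    ring
  calc ρ ^ q * r * δ ^ (-q - 1)
      ≤ (δ ^ β) ^ q * ((δ ^ β) ^ (1 - 2 * γ) * r ^ (2 * γ)) * δ ^ (-q - 1) := by
        gcongr ?_ * ?_ * _
        · exact Real.rpow_le_rpow_of_nonpos (by positivity) hρ (by linarith)
        · exact le_rpow_mul_rpow_of_le hr hrδ hγ₁
    _ = δ ^ (2 * γ * (1 - d - q) / (d - 2 + 2 * γ)) * r ^ (2 * γ) := by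
        rw [← hexp, ← Real.rpow_mul hδ.le, ← Real.rpow_mul hδ.le, Real.rpow_add hδ,
          Real.rpow_add hδ]
        ring
    _ ≤ r ^ (2 * γ) :=
        mul_le_of_le_one_left (by positivity) (Real.rpow_le_one hδ.le hδ₁ (by
          apply div_nonneg _ hD.le
          nlinarith))

lemma boundary_layer_bound_le {d : ℕ} {γ δ r ρ C₀ C₁ C₂ M₀ : ℝ} (hd : 2 ≤ d) (hγ : 0 < γ)
    (hγ₁ : 2 * γ ≤ 1) (hC₀ : 0 ≤ C₀) (hC₁ : 0 ≤ C₁) (hC₂ : 0 ≤ C₂) (hM₀ : 0 ≤ M₀)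
    (hδ : 0 < δ) (hδ₁ : δ ≤ 1) (hr : 0 ≤ r)
    (hrδ : r ≤ δ ^ (((d:ℝ) - 2) / ((d:ℝ) - 2 + 2 * γ)))
    (hρ : δ ^ (((d:ℝ) - 2) / ((d:ℝ) - 2 + 2 * γ)) ≤ ρ) :
    M₀ * (C₁ * ρ ^ ((1:ℝ) - d) * r * (C₂ / δ ^ 2) + 2 * (C₁ * ρ ^ (-(d:ℝ)) * r * (4 / δ)))
      * (C₀ * δ ^ d) ≤ C₀ * C₁ * (C₂ + 8) * M₀ * r ^ (2 * γ) := by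
  have hd' : (2 : ℝ) ≤ d := by exact_mod_cast hd
  have hδd : ∀ k : ℕ, δ ^ d / δ ^ k = δ ^ ((d:ℝ) - k) := fun k => by
    rw [Real.rpow_sub hδ, Real.rpow_natCast, Real.rpow_natCast]
  calc _ = C₀ * M₀ * (C₁ * C₂ * (ρ ^ ((1:ℝ) - d) * r * (δ ^ d / δ ^ 2))
          + 8 * C₁ * (ρ ^ (-(d:ℝ)) * r * (δ ^ d / δ ^ 1))) := by
        field_simp
        ring
    _ ≤ C₀ * M₀ * (C₁ * C₂ * r ^ (2 * γ) + 8 * C₁ * r ^ (2 * γ)) := by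
        rw [hδd, hδd, show ((d:ℝ) - (2:ℕ)) = -(1 - d) - 1 by push_cast; ring,
          show ((d:ℝ) - (1:ℕ)) = -(-d) - 1 by push_cast; ring]
        gcongr
        · exact rpow_mul_mul_rpow_le_rpow hγ.le hγ₁ (by linarith) hδ hδ₁ hr hrδ hρ le_rfl
        · exact rpow_mul_mul_rpow_le_rpow hγ.le hγ₁ (by linarith) hδ hδ₁ hr hrδ hρ
            (by linarith)
    _ = C₀ * C₁ * (C₂ + 8) * M₀ * r ^ (2 * γ) := by ring

lemma norm_setIntegral_le_of_measure_le {X F : Type*} [MeasurableSpace X] [NormedAddCommGroup F]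
    [NormedSpace ℝ F] {μ : Measure X} {s : Set X} {f : X → F} {B V : ℝ} (hB : 0 ≤ B)
    (hV : 0 ≤ V) (hs : μ s ≤ ENNReal.ofReal V) (hf : ∀ x ∈ s, ‖f x‖ ≤ B) :
    ‖∫ x in s, f x ∂μ‖ ≤ B * V :=
  (norm_setIntegral_le_of_norm_le_const (hs.trans_lt ENNReal.ofReal_lt_top) hf).trans <|
    mul_le_mul_of_nonneg_left (ENNReal.toReal_le_of_le_ofReal hV hs) hB

lemma abs_mul_add_two_inner_le {E : Type*} [NormedAddCommGroup E] [InnerProductSpace ℝ E]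
    {m ψ l M₀ a b c e : ℝ} {g h : E} (hm : |m| ≤ M₀) (hψ : |ψ| ≤ a) (hl : |l| ≤ b)
    (hg : ‖g‖ ≤ c) (hh : ‖h‖ ≤ e) :
    |m * (ψ * l + 2 * ⟪g, h⟫)| ≤ M₀ * (a * b + 2 * (c * e)) := by
  have hinner : |⟪g, h⟫| ≤ c * e :=
    (abs_real_inner_le_norm g h).trans
      (mul_le_mul hg hh (norm_nonneg h) ((norm_nonneg g).trans hg))
  rw [abs_mul]
  gcongr
  · exact (abs_nonneg m).trans hm
  · calc |ψ * l + 2 * ⟪g, h⟫| ≤ |ψ| * |l| + 2 * |⟪g, h⟫| := by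
          simpa [abs_mul] using abs_add_le (ψ * l) (2 * ⟪g, h⟫)
      _ ≤ a * b + 2 * (c * e) := by
          gcongr
          exact (abs_nonneg ψ).trans hψ

theorem boundary_layer_term_estimate
    (d : ℕ) (hd : 3 ≤ d) (γ : ℝ) (hγ : γ ∈ Set.Ioo (0:ℝ) (1/2))
    (C₀ C₁ C₂ M₀ : ℝ) (hC₀ : 0 ≤ C₀) (hC₁ : 0 ≤ C₁) (hC₂ : 0 ≤ C₂) (hM₀ : 0 ≤ M₀) :
    ∃ C : ℝ,
      ∀ (δ : ℝ), 0 < δ → δ ≤ 1 →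
      ∀ (x₁ x₂ : EuclideanSpace ℝ (Fin d)),
        ‖x₁ - x₂‖ ≤ δ ^ (((d:ℝ) - 2) / ((d:ℝ) - 2 + 2 * γ)) →
      ∀ (K : EuclideanSpace ℝ (Fin d) → ℝ),
        ContDiffOn ℝ 2 K ({(0 : EuclideanSpace ℝ (Fin d))}ᶜ) →
        (∀ z : EuclideanSpace ℝ (Fin d), z ≠ 0 → |K z| ≤ C₁ * ‖z‖ ^ ((2:ℝ) - d)) →
        (∀ z : EuclideanSpace ℝ (Fin d), z ≠ 0 →
          ‖gradient K z‖ ≤ C₁ * ‖z‖ ^ ((1:ℝ) - d)) →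
        (∀ z : EuclideanSpace ℝ (Fin d), z ≠ 0 →
          ‖fderiv ℝ (gradient K) z‖ ≤ C₁ * ‖z‖ ^ (-(d:ℝ))) →
      ∀ (A : Set (EuclideanSpace ℝ (Fin d))), MeasurableSet A →
        volume A ≤ ENNReal.ofReal (C₀ * δ ^ d) →
        (∀ y ∈ A, ∀ ξ ∈ segment ℝ x₁ x₂,
          9 * δ ^ (((d:ℝ) - 2) / ((d:ℝ) - 2 + 2 * γ)) ≤ ‖y - ξ‖) →
      ∀ (M : EuclideanSpace ℝ (Fin d) → ℝ), Measurable M → (∀ y ∈ A, |M y| ≤ M₀) →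
      ∀ (η : EuclideanSpace ℝ (Fin d) → ℝ), ContDiff ℝ 2 η →
        (∀ y ∈ A, ‖gradient η y‖ ≤ 4 / δ) →
        (∀ y ∈ A, |∑ i, pd2 η i i y| ≤ C₂ / δ ^ 2) →
      |∫ y in A, M y * ((K (y - x₁) - K (y - x₂)) * (∑ i, pd2 η i i y)
          + 2 * ⟪gradient K (y - x₁) - gradient K (y - x₂), gradient η y⟫)| ≤
        C * M₀ * ‖x₁ - x₂‖ ^ (2 * γ) := by
  refine ⟨C₀ * C₁ * (C₂ + 8), ?_⟩
  intro δ hδ hδ₁ x₁ x₂ hx K hK _ hK₁ hK₂ A _ hA hAfar M _ hM η _ hη₁ hη₂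
  set ρ := 9 * δ ^ (((d:ℝ) - 2) / ((d:ℝ) - 2 + 2 * γ))
  have hρ₀ : 0 < ρ := by positivity
  have hρ : δ ^ (((d:ℝ) - 2) / ((d:ℝ) - 2 + 2 * γ)) ≤ ρ :=
    le_mul_of_one_le_left (by positivity) (by norm_num)
  have hd' : (3 : ℝ) ≤ d := by exact_mod_cast hd
  have hK' : ∀ z, z ≠ 0 → ContDiffAt ℝ 2 K z := fun z hz =>
    hK.contDiffAt (isOpen_compl_singleton.mem_nhds hz)
  have hψ : ∀ y ∈ A, |K (y - x₁) - K (y - x₂)| ≤ C₁ * ρ ^ ((1:ℝ) - d) * ‖x₁ - x₂‖ :=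
    fun y hy => norm_sub_le_of_norm_fderiv_le_rpow_of_forall_mem_segment
      (fun z hz => (hK' z hz).differentiableAt two_ne_zero)
      (fun z hz => (norm_fderiv_eq_norm_gradient K z).trans_le (hK₁ z hz)) hC₁ hρ₀
      (by linarith) (hAfar y hy)
  have hgradψ : ∀ y ∈ A, ‖gradient K (y - x₁) - gradient K (y - x₂)‖
      ≤ C₁ * ρ ^ (-(d:ℝ)) * ‖x₁ - x₂‖ :=
    fun y hy => norm_sub_le_of_norm_fderiv_le_rpow_of_forall_mem_segment
      (fun z hz => (hK' z hz).differentiableAt_gradient) hK₂ hC₁ hρ₀ (by linarith) (hAfar y hy)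
  rw [← Real.norm_eq_abs]
  refine (norm_setIntegral_le_of_measure_le (by positivity) (by positivity) hA fun y hy => ?_).trans
    (boundary_layer_bound_le (by omega) hγ.1 (by linarith [hγ.2]) hC₀ hC₁ hC₂ hM₀ hδ hδ₁
      (norm_nonneg _) hx hρ)
  rw [Real.norm_eq_abs]
  exact abs_mul_add_two_inner_le (hM y hy) (hψ y hy) (hη₂ y hy) (hgradψ y hy) (hη₁ y hy)
end

section
/- Let d ≥ 2, γ ∈ (0, 1/2), and let c₀ > 0 and C₀ ≥ 0. Then there exists a constant C, depending only on d, γ, c₀ and C₀, such that the following holds: whenever δ > 0 and ρ > 0 satisfy c₀ δ ≤ ρ, x̄ ∈ ℝ^d, and A ⊆ ℝ^d is Lebesgue measurable with measure at most C₀ δ^d and with ‖y − x̄‖ ≥ 5ρ for all y ∈ A, then ∫_A [ ρ δ^{−1} ‖y − x̄‖^{2γ−d} + ρ δ^{−2} ‖y − x̄‖^{2γ−d+1} ] dy ≤ C ρ^{2γ}. -/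
/-!
On `A` we have `‖y - x̄‖ ≥ 5ρ` and both exponents are nonpositive, so the integrand is bounded
by its value at radius `5ρ`. Integrating this constant over `A` costs a factor `C₀ δ^d`, and
`δ ≤ ρ / c₀` turns the leftover `δ^(d-1)` and `δ^(d-2)` into powers of `ρ`, which leaves `ρ^(2γ)`.
-/

open MeasureTheory

theorem norm_setIntegral_le_of_norm_le_const_of_measure_le {α E : Type*} [MeasurableSpace α]
    [NormedAddCommGroup E] [NormedSpace ℝ E] {μ : Measure α} {s : Set α} {f : α → E} {C V : ℝ}
    (hf : ∀ x ∈ s, ‖f x‖ ≤ C) (hμ : μ s ≤ ENNReal.ofReal V) (hC : 0 ≤ C) (hV : 0 ≤ V) :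
    ‖∫ x in s, f x ∂μ‖ ≤ C * V :=
  calc ‖∫ x in s, f x ∂μ‖ ≤ C * μ.real s :=
        norm_setIntegral_le_of_norm_le_const (hμ.trans_lt ENNReal.ofReal_lt_top) hf
    _ ≤ C * V := by
        gcongr
        exact ENNReal.toReal_le_of_le_ofReal hV hμ

theorem div_pow_mul_rpow_le_of_mul_le {a c₀ δ ρ r s : ℝ} (k n : ℕ) (ha : 0 < a) (hc₀ : 0 < c₀)
    (hδ : 0 < δ) (hρ : 0 < ρ) (hcδ : c₀ * δ ≤ ρ) (hr : a * ρ ≤ r) (hs : s ≤ 0) :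
    ρ / δ ^ k * r ^ s ≤ a ^ s / c₀ ^ n * (ρ ^ (s + 1 + n) / δ ^ (k + n)) := by
  have hr' : r ^ s ≤ a ^ s * ρ ^ s :=
    (Real.rpow_le_rpow_of_nonpos (by positivity) hr hs).trans_eq (Real.mul_rpow ha.le hρ.le)
  have hδn : c₀ ^ n * δ ^ n ≤ ρ ^ n := by
    rw [← mul_pow]
    exact pow_le_pow_left₀ (by positivity) hcδ n
  have hρ_exp : ρ ^ (s + 1 + n) = ρ ^ s * ρ * ρ ^ n := by
    rw [Real.rpow_add hρ, Real.rpow_add hρ, Real.rpow_one, Real.rpow_natCast]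
  calc ρ / δ ^ k * r ^ s ≤ ρ / δ ^ k * (a ^ s * ρ ^ s) := by gcongr
    _ = a ^ s * ρ ^ s * ρ * (c₀ ^ n * δ ^ n) / (c₀ ^ n * δ ^ (k + n)) := by
        field_simp
        ring
    _ ≤ a ^ s * ρ ^ s * ρ * ρ ^ n / (c₀ ^ n * δ ^ (k + n)) := by gcongr
    _ = a ^ s / c₀ ^ n * (ρ ^ (s + 1 + n) / δ ^ (k + n)) := by
        rw [hρ_exp]
        field_simp

theorem annulus_boundary_layer_estimate
    (d : ℕ) (hd : 2 ≤ d) (γ : ℝ) (hγ : γ ∈ Set.Ioo (0:ℝ) (1/2))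
    (c₀ : ℝ) (hc₀ : 0 < c₀) (C₀ : ℝ) (hC₀ : 0 ≤ C₀) :
    ∃ C : ℝ, ∀ (δ ρ : ℝ), 0 < δ → 0 < ρ → c₀ * δ ≤ ρ →
      ∀ (xb : EuclideanSpace ℝ (Fin d)) (A : Set (EuclideanSpace ℝ (Fin d))),
        MeasurableSet A → volume A ≤ ENNReal.ofReal (C₀ * δ ^ d) →
        (∀ y ∈ A, 5 * ρ ≤ ‖y - xb‖) →
        ∫ y in A,
            (ρ / δ * ‖y - xb‖ ^ (2 * γ - d) + ρ / δ ^ 2 * ‖y - xb‖ ^ (2 * γ - d + 1)) ≤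
          C * ρ ^ (2 * γ) := by
  set K := (5 : ℝ) ^ (2 * γ - d) / c₀ ^ (d - 1) + 5 ^ (2 * γ - d + 1) / c₀ ^ (d - 2)
  refine ⟨K * C₀, fun δ ρ hδ hρ hcδ xb A _ hvol hfar => ?_⟩
  have hd' : (2 : ℝ) ≤ d := by exact_mod_cast hd
  have hpointwise : ∀ y ∈ A, ‖ρ / δ * ‖y - xb‖ ^ (2 * γ - d)
      + ρ / δ ^ 2 * ‖y - xb‖ ^ (2 * γ - d + 1)‖ ≤ K * (ρ ^ (2 * γ) / δ ^ d) := by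
    intro y hy
    have h₁ := div_pow_mul_rpow_le_of_mul_le 1 (d - 1) (by norm_num) hc₀ hδ hρ hcδ (hfar y hy)
      (s := 2 * γ - d) (by linarith [hγ.2])
    have h₂ := div_pow_mul_rpow_le_of_mul_le 2 (d - 2) (by norm_num) hc₀ hδ hρ hcδ (hfar y hy)
      (s := 2 * γ - d + 1) (by linarith [hγ.2])
    rw [Nat.cast_sub (by omega), Nat.add_sub_cancel' (by omega), pow_one,
      show 2 * γ - d + 1 + (d - ((1 : ℕ) : ℝ)) = 2 * γ by push_cast; ring] at h₁
    rw [Nat.cast_sub hd, Nat.add_sub_cancel' hd,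
      show 2 * γ - d + 1 + 1 + (d - ((2 : ℕ) : ℝ)) = 2 * γ by push_cast; ring] at h₂
    rw [Real.norm_of_nonneg (by positivity)]
    exact (add_le_add h₁ h₂).trans_eq (by ring)
  calc _ ≤ ‖∫ y in A, (ρ / δ * ‖y - xb‖ ^ (2 * γ - d)
          + ρ / δ ^ 2 * ‖y - xb‖ ^ (2 * γ - d + 1))‖ := Real.le_norm_self _
    _ ≤ K * (ρ ^ (2 * γ) / δ ^ d) * (C₀ * δ ^ d) :=
        norm_setIntegral_le_of_norm_le_const_of_measure_le hpointwise hvol (by positivity)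
          (by positivity)
    _ = K * C₀ * ρ ^ (2 * γ) := by field_simp
end
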